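/- The cluster-state boundary operators realize the twist phase Ω((a,b),(c,d)) = (−1)^{ad−bc}: for each E ∈ {L, R}, each block p, and all g = (a,b), h = (c,d) ∈ ℤ₂×ℤ₂, V^E_p(g) · V^E_p(h) = (−1)^{ad−bc} · V^E_p(h) · V^E_p(g) as matrices (where (−1)^{ad−bc} = (−1)^{ad+bc}). -/
import Mathlib


open Matrix Complex
open scoped ComplexOrder

noncomputable section

/-- The state space of `n` qubits, as functions on classical bit strings. -/
abbrev QState (n : ℕ) := (Fin n → Fin 2) → ℂ

/-- Operators on `n` qubits: `2^n × 2^n` complex matrices. -/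
abbrev Op (n : ℕ) := Matrix (Fin n → Fin 2) (Fin n → Fin 2) ℂ

/-- The single-qubit Pauli `X` matrix. -/
def Xmat : Matrix (Fin 2) (Fin 2) ℂ := !![0, 1; 1, 0]

/-- The single-qubit Pauli `Z` matrix. -/
def Zmat : Matrix (Fin 2) (Fin 2) ℂ := !![1, 0; 0, -1]

/-- Map a 1-based cyclic site label `j ∈ {1,…,n}` (taken mod `n`) to an index in `Fin n`. -/
def site (n : ℕ) [NeZero n] (j : ℕ) : Fin n :=
  ⟨(j + (n - 1)) % n, Nat.mod_lt _ (Nat.pos_of_ne_zero (NeZero.ne n))⟩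

/-- The operator acting as the single-qubit matrix `M` on qubit `i` and as identity elsewhere. -/
def onSite (n : ℕ) (i : Fin n) (M : Matrix (Fin 2) (Fin 2) ℂ) : Op n :=
  Matrix.of fun s t => (if ∀ k, k ≠ i → s k = t k then 1 else 0) * M (s i) (t i)

/-- Pauli `X` on (1-based, cyclic) site `j`. -/
def PX (n : ℕ) [NeZero n] (j : ℕ) : Op n := onSite n (site n j) Xmat

/-- Pauli `Z` on (1-based, cyclic) site `j`. -/
def PZ (n : ℕ) [NeZero n] (j : ℕ) : Op n := onSite n (site n j) Zmat

/-- The cyclic cluster stabilizer `K_j = Z_{j-1} X_j Z_{j+1}` (for `1 ≤ j ≤ n`). -/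
def Kstab (n : ℕ) [NeZero n] (j : ℕ) : Op n := PZ n (j - 1) * PX n j * PZ n (j + 1)

/-- The symmetry group `ℤ₂ × ℤ₂`. -/
abbrev G2 := ZMod 2 × ZMod 2

/-- The nontrivial element `x = (0,1)` of `ℤ₂ × ℤ₂`. -/
def gx : G2 := (0, 1)

/-- The nontrivial element `y = (1,0)` of `ℤ₂ × ℤ₂`. -/
def gy : G2 := (1, 0)

/-- The nontrivial element `z = (1,1)` of `ℤ₂ × ℤ₂`. -/
def gz : G2 := (1, 1)

/-- The global symmetry representation `U((a,b)) = ∏_{j odd} X_j^a ∏_{j even} X_j^b`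
on `n` qubits (`n` even), written as a product over the `n/2` two-site blocks. -/
def Usym (n : ℕ) [NeZero n] (g : G2) : Op n :=
  ((List.range (n / 2)).map
    (fun p => PX n (2 * p + 1) ^ g.1.val * PX n (2 * p + 2) ^ g.2.val)).prod

/-- Left boundary operator `V^L_p((a,b))`: `Z^b` on qubit `2p-1` and `X^b Z^a` on qubit `2p`. -/
def VL (n : ℕ) [NeZero n] (p : ℕ) (g : G2) : Op n :=
  PZ n (2 * p - 1) ^ g.2.val * (PX n (2 * p) ^ g.2.val * PZ n (2 * p) ^ g.1.val)

/-- Right boundary operator `V^R_p((a,b))`: `Z^b X^a` on qubit `2p-1` and `Z^a` on qubit `2p`. -/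
def VR (n : ℕ) [NeZero n] (p : ℕ) (g : G2) : Op n :=
  (PZ n (2 * p - 1) ^ g.2.val * PX n (2 * p - 1) ^ g.1.val) * PZ n (2 * p) ^ g.1.val

/-- Truncated symmetry `U_{[p,q]}((a,b)) = ∏_{r=p+1}^{q-1} X_{2r-1}^a X_{2r}^b`. -/
def Ustr (n : ℕ) [NeZero n] (p q : ℕ) (g : G2) : Op n :=
  ((List.range (q - (p + 1))).map
    (fun r => PX n (2 * (p + 1 + r) - 1) ^ g.1.val * PX n (2 * (p + 1 + r)) ^ g.2.val)).prod

/-- The string order parameter `S_{[p,q]}(g) = V^L_p(g) · U_{[p,q]}(g) · V^R_q(g)`. -/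
def SOPm (n : ℕ) [NeZero n] (p q : ℕ) (g : G2) : Op n :=
  VL n p g * Ustr n p q g * VR n q g

/-- The twisted string order parameter
`T_{[p,q]}^{(g,h)} = V^R_q(g) · U(h) · V^L_p(g) · U_{[p,q]}(g)`. -/
def TSOP (n : ℕ) [NeZero n] (p q : ℕ) (g h : G2) : Op n :=
  VR n q g * Usym n h * VL n p g * Ustr n p q g

/-- The triangle-game winning operator
`O_{g,h} = (1/32)(12·1 + 12 U(g) + U(h) + U(gh) − 3T − 3U(g)T)` with `T = T_{[1,n/6+1]}^{(g,h)}`. -/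
def Owin (n : ℕ) [NeZero n] (g h : G2) : Op n :=
  (32 : ℂ)⁻¹ • (12 • (1 : Op n) + 12 • Usym n g + Usym n h + Usym n (g + h)
    - 3 • TSOP n 1 (n / 6 + 1) g h - 3 • (Usym n g * TSOP n 1 (n / 6 + 1) g h))

/-- The `n`-fold tensor product `|+⟩^{⊗n}`, with all amplitudes `(1/√2)^n`. -/
def plusState (n : ℕ) : QState n := fun _ => (((Real.sqrt 2)⁻¹ : ℝ) : ℂ) ^ n

/-- The controlled-`Z` gate between (1-based, cyclic) sites `j` and `k`. -/
def CZm (n : ℕ) [NeZero n] (j k : ℕ) : Op n :=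
  Matrix.of fun s t =>
    if s = t then (if s (site n j) = 1 ∧ s (site n k) = 1 then -1 else 1) else 0

/-- The `n`-qubit cyclic cluster state `|C_n⟩ = (∏_{j=1}^n CZ_{j,j+1}) |+⟩^{⊗n}`. -/
def cluster (n : ℕ) [NeZero n] : QState n :=
  (((List.range n).map (fun j => CZm n (j + 1) (j + 2))).prod).mulVec (plusState n)

/-- The boundary operator `V^E_p`, with `E = true` for `L` and `E = false` for `R`. -/
def Vbdry (n : ℕ) [NeZero n] (E : Bool) (p : ℕ) (g : G2) : Op n :=
  if E then VL n p g else VR n p g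


lemma onSite_mul (n : ℕ) (i : Fin n) (M N : Matrix (Fin 2) (Fin 2) ℂ) :
    onSite n i M * onSite n i N = onSite n i (M * N) := by
  ext s t
  simp only [Matrix.mul_apply, onSite, Matrix.of_apply]
  by_cases h : ∀ k, k ≠ i → s k = t k
  · rw [if_pos h]
    have hne : Function.update s i 0 ≠ Function.update s i 1 := by
      intro hEq
      have := congrFun hEq i
      simp at this
    have hv : ∀ u ∈ (Finset.univ : Finset (Fin n → Fin 2)),
        u ∉ ({Function.update s i 0, Function.update s i 1} : Finset (Fin n → Fin 2)) →
        (if ∀ k, k ≠ i → s k = u k then 1 else 0) * M (s i) (u i) *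
          ((if ∀ k, k ≠ i → u k = t k then 1 else 0) * N (u i) (t i)) = 0 := by
      intro u _ hu
      by_cases h1 : ∀ k, k ≠ i → s k = u k
      · exfalso
        apply hu
        have hui : u = Function.update s i (u i) := by
          funext k
          by_cases hk : k = i
          · subst hk; simp
          · rw [Function.update_of_ne hk, h1 k hk]
        have : u i = 0 ∨ u i = 1 := (by decide : ∀ v : Fin 2, v = 0 ∨ v = 1) (u i)
        rcases this with h0 | h0 <;> rw [hui, h0] <;> simp
      · rw [if_neg h1]; ring
    rw [← Finset.sum_subset (Finset.subset_univ _) hv, Finset.sum_pair hne]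
    have e0 : ∀ v : Fin 2,
        (if ∀ k, k ≠ i → s k = Function.update s i v k then 1 else 0) *
            M (s i) (Function.update s i v i) *
          ((if ∀ k, k ≠ i → Function.update s i v k = t k then 1 else 0) *
            N (Function.update s i v i) (t i))
        = M (s i) v * N v (t i) := by
      intro v
      have h1 : ∀ k, k ≠ i → s k = Function.update s i v k := by
        intro k hk; rw [Function.update_of_ne hk]
      have h2 : ∀ k, k ≠ i → Function.update s i v k = t k := by
        intro k hk; rw [Function.update_of_ne hk]; exact h k hk
      rw [if_pos h1, if_pos h2, Function.update_self]
      ring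
    rw [e0 0, e0 1, Fin.sum_univ_two]
    ring
  · rw [if_neg h, zero_mul]
    apply Finset.sum_eq_zero
    intro u _
    by_cases h1 : ∀ k, k ≠ i → s k = u k
    · have h2 : ¬ ∀ k, k ≠ i → u k = t k := by
        intro h2
        exact h fun k hk => (h1 k hk).trans (h2 k hk)
      rw [if_neg h2]; ring
    · rw [if_neg h1]; ring

lemma onSite_one (n : ℕ) (i : Fin n) : onSite n i 1 = 1 := by
  ext s t
  simp only [onSite, Matrix.of_apply, Matrix.one_apply]
  by_cases h : s = t
  · subst h; simp
  · have hcon : ¬ ((∀ k, k ≠ i → s k = t k) ∧ s i = t i) := by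
      intro ⟨h1, h2⟩
      exact h (funext fun k => if hk : k = i then by rw [hk]; exact h2 else h1 k hk)
    rw [if_neg h]
    by_cases h1 : ∀ k, k ≠ i → s k = t k
    · rw [if_pos h1, if_neg (fun h2 => hcon ⟨h1, h2⟩)]
      ring
    · rw [if_neg h1]; ring

lemma onSite_pow (n : ℕ) (i : Fin n) (M : Matrix (Fin 2) (Fin 2) ℂ) (k : ℕ) :
    onSite n i M ^ k = onSite n i (M ^ k) := by
  induction k with
  | zero => simp [onSite_one]
  | succ k ih => rw [pow_succ, pow_succ, ih, onSite_mul]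

lemma onSite_smul (n : ℕ) (i : Fin n) (c : ℂ) (M : Matrix (Fin 2) (Fin 2) ℂ) :
    onSite n i (c • M) = c • onSite n i M := by
  ext s t
  simp only [onSite, Matrix.of_apply, Matrix.smul_apply, smul_eq_mul]
  ring

lemma onSite_mul_ne (n : ℕ) {i j : Fin n} (hij : i ≠ j)
    (M N : Matrix (Fin 2) (Fin 2) ℂ) :
    onSite n i M * onSite n j N = Matrix.of fun s t =>
      (if ∀ k, k ≠ i → k ≠ j → s k = t k then 1 else 0) * (M (s i) (t i) * N (s j) (t j)) := by
  ext s t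
  simp only [Matrix.mul_apply, onSite, Matrix.of_apply]
  rw [Finset.sum_eq_single (Function.update s i (t i))]
  · have h1 : ∀ k, k ≠ i → s k = Function.update s i (t i) k := by
      intro k hk; rw [Function.update_of_ne hk]
    rw [if_pos h1, Function.update_self, Function.update_of_ne (Ne.symm hij)]
    by_cases h : ∀ k, k ≠ i → k ≠ j → s k = t k
    · have h2 : ∀ k, k ≠ j → Function.update s i (t i) k = t k := by
        intro k hk
        by_cases hki : k = i
        · subst hki; simp
        · rw [Function.update_of_ne hki]; exact h k hki hk
      rw [if_pos h, if_pos h2]; ring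
    · have h2 : ¬ ∀ k, k ≠ j → Function.update s i (t i) k = t k := by
        intro h2
        apply h
        intro k hki hkj
        have := h2 k hkj
        rwa [Function.update_of_ne hki] at this
      rw [if_neg h, if_neg h2]; ring
  · intro u _ hu
    by_cases h1 : ∀ k, k ≠ i → s k = u k
    · by_cases h2 : ∀ k, k ≠ j → u k = t k
      · exfalso
        apply hu
        funext k
        by_cases hk : k = i
        · subst hk; rw [Function.update_self]; exact h2 k hij
        · rw [Function.update_of_ne hk]; exact (h1 k hk).symm
      · rw [if_neg h2]; ring
    · rw [if_neg h1]; ring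
  · intro h; exact absurd (Finset.mem_univ _) h

lemma onSite_comm (n : ℕ) {i j : Fin n} (hij : i ≠ j)
    (M N : Matrix (Fin 2) (Fin 2) ℂ) :
    onSite n i M * onSite n j N = onSite n j N * onSite n i M := by
  rw [onSite_mul_ne n hij, onSite_mul_ne n hij.symm]
  ext s t
  simp only [Matrix.of_apply]
  have hiff : (∀ k, k ≠ i → k ≠ j → s k = t k) ↔ (∀ k, k ≠ j → k ≠ i → s k = t k) := by
    constructor <;> intro h k h1 h2 <;> exact h k h2 h1
  rw [if_congr hiff rfl rfl]
  ring

lemma two_site_mul (n : ℕ) {i j : Fin n} (hij : i ≠ j)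
    (A B A' B' : Matrix (Fin 2) (Fin 2) ℂ) :
    (onSite n i A * onSite n j B) * (onSite n i A' * onSite n j B')
      = onSite n i (A * A') * onSite n j (B * B') := by
  rw [mul_assoc, ← mul_assoc (onSite n j B), onSite_comm n hij.symm,
    mul_assoc (onSite n i A') (onSite n j B), ← mul_assoc (onSite n i A),
    onSite_mul, onSite_mul]

lemma four_mul_same (n : ℕ) (i : Fin n) (A B A' B' : Matrix (Fin 2) (Fin 2) ℂ) :
    (onSite n i A * onSite n i B) * (onSite n i A' * onSite n i B')
      = onSite n i (A * B * (A' * B')) := by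
  rw [onSite_mul, onSite_mul, onSite_mul]

set_option linter.unreachableTactic false in
set_option linter.unusedTactic false in
lemma twistL2 (a b c d : ℕ) (ha : a < 2) (hb : b < 2) (hc : c < 2) (hd : d < 2) :
    (Xmat ^ b * Zmat ^ a) * (Xmat ^ d * Zmat ^ c)
      = ((-1 : ℂ) ^ (a * d + b * c)) • ((Xmat ^ d * Zmat ^ c) * (Xmat ^ b * Zmat ^ a)) := by
  interval_cases a <;> interval_cases b <;> interval_cases c <;> interval_cases d <;>
    · ext i j
      fin_cases i <;> fin_cases j <;>
        simp [Xmat, Zmat, Matrix.mul_apply, Fin.sum_univ_two] <;> ring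

set_option linter.unreachableTactic false in
set_option linter.unusedTactic false in
lemma twistLsame (a b c d : ℕ) (ha : a < 2) (hb : b < 2) (hc : c < 2) (hd : d < 2) :
    (Zmat ^ b * (Xmat ^ b * Zmat ^ a)) * (Zmat ^ d * (Xmat ^ d * Zmat ^ c))
      = ((-1 : ℂ) ^ (a * d + b * c)) •
          ((Zmat ^ d * (Xmat ^ d * Zmat ^ c)) * (Zmat ^ b * (Xmat ^ b * Zmat ^ a))) := by
  interval_cases a <;> interval_cases b <;> interval_cases c <;> interval_cases d <;>
    · ext i j
      fin_cases i <;> fin_cases j <;>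
        simp [Xmat, Zmat, Matrix.mul_apply, Fin.sum_univ_two] <;> ring

set_option linter.unreachableTactic false in
set_option linter.unusedTactic false in
lemma twistR2 (a b c d : ℕ) (ha : a < 2) (hb : b < 2) (hc : c < 2) (hd : d < 2) :
    (Zmat ^ b * Xmat ^ a) * (Zmat ^ d * Xmat ^ c)
      = ((-1 : ℂ) ^ (a * d + b * c)) • ((Zmat ^ d * Xmat ^ c) * (Zmat ^ b * Xmat ^ a)) := by
  interval_cases a <;> interval_cases b <;> interval_cases c <;> interval_cases d <;>
    · ext i j
      fin_cases i <;> fin_cases j <;>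
        simp [Xmat, Zmat, Matrix.mul_apply, Fin.sum_univ_two] <;> ring

set_option linter.unreachableTactic false in
set_option linter.unusedTactic false in
lemma twistRsame (a b c d : ℕ) (ha : a < 2) (hb : b < 2) (hc : c < 2) (hd : d < 2) :
    (Zmat ^ b * Xmat ^ a * Zmat ^ a) * (Zmat ^ d * Xmat ^ c * Zmat ^ c)
      = ((-1 : ℂ) ^ (a * d + b * c)) •
          ((Zmat ^ d * Xmat ^ c * Zmat ^ c) * (Zmat ^ b * Xmat ^ a * Zmat ^ a)) := by
  interval_cases a <;> interval_cases b <;> interval_cases c <;> interval_cases d <;>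
    · ext i j
      fin_cases i <;> fin_cases j <;>
        simp [Xmat, Zmat, Matrix.mul_apply, Fin.sum_univ_two] <;> ring

lemma VL_eq (n : ℕ) [NeZero n] (p : ℕ) (g : G2) :
    VL n p g = onSite n (site n (2 * p - 1)) (Zmat ^ g.2.val) *
      onSite n (site n (2 * p)) (Xmat ^ g.2.val * Zmat ^ g.1.val) := by
  simp only [VL, PZ, PX, onSite_pow, onSite_mul]

lemma VR_eq (n : ℕ) [NeZero n] (p : ℕ) (g : G2) :
    VR n p g = onSite n (site n (2 * p - 1)) (Zmat ^ g.2.val * Xmat ^ g.1.val) *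
      onSite n (site n (2 * p)) (Zmat ^ g.1.val) := by
  simp only [VR, PZ, PX, onSite_pow, onSite_mul]

lemma zpow_swap (b d : ℕ) : Zmat ^ b * Zmat ^ d = Zmat ^ d * Zmat ^ b := by
  rw [← pow_add, ← pow_add, Nat.add_comm]

/-- The cluster-state boundary operators realize the twist phase
`Ω((a,b),(c,d)) = (−1)^{ad−bc} = (−1)^{ad+bc}`:
`V^E_p(g) V^E_p(h) = (−1)^{ad+bc} V^E_p(h) V^E_p(g)` for `E ∈ {L,R}`. -/
theorem boundary_twist_phase (n : ℕ) [NeZero n] (E : Bool) (p : ℕ) (g h : G2) :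
    Vbdry n E p g * Vbdry n E p h
      = ((-1 : ℂ) ^ (g.1.val * h.2.val + g.2.val * h.1.val)) •
          (Vbdry n E p h * Vbdry n E p g) := by
  cases E
  · -- right boundary
    simp only [Vbdry, Bool.false_eq_true, if_false]
    rw [VR_eq n p g, VR_eq n p h]
    by_cases hij : site n (2 * p - 1) = site n (2 * p)
    · rw [hij, four_mul_same, four_mul_same,
        twistRsame g.1.val g.2.val h.1.val h.2.val
          (ZMod.val_lt _) (ZMod.val_lt _) (ZMod.val_lt _) (ZMod.val_lt _),
        onSite_smul]
    · rw [two_site_mul n hij, two_site_mul n hij,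
        twistR2 g.1.val g.2.val h.1.val h.2.val
          (ZMod.val_lt _) (ZMod.val_lt _) (ZMod.val_lt _) (ZMod.val_lt _),
        onSite_smul, smul_mul_assoc, zpow_swap g.1.val h.1.val]
  · -- left boundary
    simp only [Vbdry, if_true]
    rw [VL_eq n p g, VL_eq n p h]
    by_cases hij : site n (2 * p - 1) = site n (2 * p)
    · rw [hij, four_mul_same, four_mul_same,
        twistLsame g.1.val g.2.val h.1.val h.2.val
          (ZMod.val_lt _) (ZMod.val_lt _) (ZMod.val_lt _) (ZMod.val_lt _),
        onSite_smul]
    · rw [two_site_mul n hij, two_site_mul n hij,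
        twistL2 g.1.val g.2.val h.1.val h.2.val
          (ZMod.val_lt _) (ZMod.val_lt _) (ZMod.val_lt _) (ZMod.val_lt _),
        onSite_smul, mul_smul_comm, zpow_swap g.2.val h.2.val]
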